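/- arXiv:2509.14798 — 2 statements merged into one kernel-verified Lean document; each statement's English description precedes it below -/
import Mathlib

section
/- (Lemma 3.) Let y be a singular nonzero vector of V(2n,2) with y ∉ Π and y ∉ Σ. Then there exists a unique 2-dimensional subspace L of V(2n,2) containing y that meets both Π and Σ nontrivially (i.e. L ⊓ Π ≠ 0 and L ⊓ Σ ≠ 0); moreover this L is totally singular (Q vanishes on every vector of L). -/
/-- The hyperbolic quadratic form on `V(2n,2)`:
`Q x = ∑_{i=0}^{n-1} x (2i) * x (2i+1)`. -/
def Q (n : ℕ) (x : Fin (2*n) → ZMod 2) : ZMod 2 :=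
  ∑ i : Fin n, x ⟨2*i.1, by have := i.2; omega⟩ * x ⟨2*i.1+1, by have := i.2; omega⟩

/-- The bilinear form associated with `Q`: `B u v = Q (u+v) + Q u + Q v`. -/
def B (n : ℕ) (u v : Fin (2*n) → ZMod 2) : ZMod 2 :=
  Q n (u + v) + Q n u + Q n v

lemma B_eq (n : ℕ) (u v : Fin (2*n) → ZMod 2) :
    B n u v = ∑ i : Fin n,
      (u ⟨2*i.1, by have := i.2; omega⟩ * v ⟨2*i.1+1, by have := i.2; omega⟩
        + u ⟨2*i.1+1, by have := i.2; omega⟩ * v ⟨2*i.1, by have := i.2; omega⟩) := by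
  have key : ∀ a b c d : ZMod 2, (a+c)*(b+d) + a*b + c*d = a*d + c*b := by decide
  simp only [B, Q, Pi.add_apply, ← Finset.sum_add_distrib]
  exact Finset.sum_congr rfl fun i _ => by rw [key]; ring

lemma B_add_left (n : ℕ) (u v w : Fin (2*n) → ZMod 2) :
    B n (u + v) w = B n u w + B n v w := by
  simp only [B_eq, Pi.add_apply, ← Finset.sum_add_distrib]
  exact Finset.sum_congr rfl fun i _ => by ring

lemma B_smul_left (n : ℕ) (c : ZMod 2) (v w : Fin (2*n) → ZMod 2) :
    B n (c • v) w = c * B n v w := by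
  simp only [B_eq, Pi.smul_apply, smul_eq_mul, Finset.mul_sum]
  exact Finset.sum_congr rfl fun i _ => by ring

/-- The perp `S^⊥ = {v : B v s = 0 for all s ∈ S}` of a subspace `S`
with respect to the bilinear form `B`. -/
def perp (n : ℕ) (S : Submodule (ZMod 2) (Fin (2*n) → ZMod 2)) :
    Submodule (ZMod 2) (Fin (2*n) → ZMod 2) where
  carrier := {v | ∀ s ∈ S, B n v s = 0}
  zero_mem' := by intro s _; simp [B_eq]
  add_mem' := by
    intro a b ha hb s hs
    rw [B_add_left, ha s hs, hb s hs, add_zero]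
  smul_mem' := by
    intro c v hv s hs
    rw [B_smul_left, hv s hs, mul_zero]

/-- `Π`, the span of the even-indexed standard basis vectors `e_{2i}`,
a maximal totally singular subspace. -/
def PiSub (n : ℕ) : Submodule (ZMod 2) (Fin (2*n) → ZMod 2) :=
  Submodule.span (ZMod 2) {v | ∃ j : Fin (2*n), j.1 % 2 = 0 ∧ v = Pi.single j 1}

/-- `Σ`, the span of the odd-indexed standard basis vectors `e_{2i+1}`,
a maximal totally singular subspace disjoint from `Π`. -/
def SigmaSub (n : ℕ) : Submodule (ZMod 2) (Fin (2*n) → ZMod 2) :=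
  Submodule.span (ZMod 2) {v | ∃ j : Fin (2*n), j.1 % 2 = 1 ∧ v = Pi.single j 1}

lemma zmod2_cases (a : ZMod 2) : a = 0 ∨ a = 1 := by revert a; decide

lemma single_eq_smul {n : ℕ} (j : Fin (2*n)) (c : ZMod 2) :
    Pi.single j c = c • (Pi.single j 1 : Fin (2*n) → ZMod 2) := by
  funext k
  by_cases h : k = j
  · subst h; simp
  · simp [Pi.single_eq_of_ne h]

lemma mem_PiSub_iff (n : ℕ) (v : Fin (2*n) → ZMod 2) :
    v ∈ PiSub n ↔ ∀ j : Fin (2*n), j.1 % 2 = 1 → v j = 0 := by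
  constructor
  · intro hv
    induction hv using Submodule.span_induction with
    | mem x hx =>
      obtain ⟨j0, hj0, rfl⟩ := hx
      intro j hj
      rw [Pi.single_eq_of_ne]
      intro h; rw [h] at hj; omega
    | zero => simp
    | add x y hx hy ihx ihy =>
      intro j hj; simp [Pi.add_apply, ihx j hj, ihy j hj]
    | smul a x hx ihx =>
      intro j hj; simp [ihx j hj]
  · intro h
    have hv : v = ∑ j : Fin (2*n), Pi.single j (v j) := (Finset.univ_sum_single v).symm
    rw [hv]
    refine Submodule.sum_mem _ fun j _ => ?_
    rcases Nat.even_or_odd j.1 with he | ho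
    · rw [single_eq_smul]
      exact Submodule.smul_mem _ _ (Submodule.subset_span ⟨j, Nat.even_iff.1 he, rfl⟩)
    · have : v j = 0 := h j (Nat.odd_iff.1 ho)
      rw [this, Pi.single_zero]; exact Submodule.zero_mem _

lemma mem_SigmaSub_iff (n : ℕ) (v : Fin (2*n) → ZMod 2) :
    v ∈ SigmaSub n ↔ ∀ j : Fin (2*n), j.1 % 2 = 0 → v j = 0 := by
  constructor
  · intro hv
    induction hv using Submodule.span_induction with
    | mem x hx =>
      obtain ⟨j0, hj0, rfl⟩ := hx
      intro j hj
      rw [Pi.single_eq_of_ne]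
      intro h; rw [h] at hj; omega
    | zero => simp
    | add x y hx hy ihx ihy =>
      intro j hj; simp [Pi.add_apply, ihx j hj, ihy j hj]
    | smul a x hx ihx =>
      intro j hj; simp [ihx j hj]
  · intro h
    have hv : v = ∑ j : Fin (2*n), Pi.single j (v j) := (Finset.univ_sum_single v).symm
    rw [hv]
    refine Submodule.sum_mem _ fun j _ => ?_
    rcases Nat.even_or_odd j.1 with he | ho
    · have : v j = 0 := h j (Nat.even_iff.1 he)
      rw [this, Pi.single_zero]; exact Submodule.zero_mem _
    · rw [single_eq_smul]
      exact Submodule.smul_mem _ _ (Submodule.subset_span ⟨j, Nat.odd_iff.1 ho, rfl⟩)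

/-- Q vanishes on vectors supported on even indices. -/
lemma Q_even_supported (n : ℕ) (v : Fin (2*n) → ZMod 2)
    (h : ∀ j : Fin (2*n), j.1 % 2 = 1 → v j = 0) : Q n v = 0 := by
  unfold Q
  refine Finset.sum_eq_zero fun i _ => ?_
  rw [h ⟨2*i.1+1, by have := i.2; omega⟩ (by simp [Nat.add_mul_mod_self_left]), mul_zero]

lemma Q_odd_supported (n : ℕ) (v : Fin (2*n) → ZMod 2)
    (h : ∀ j : Fin (2*n), j.1 % 2 = 0 → v j = 0) : Q n v = 0 := by
  unfold Q
  refine Finset.sum_eq_zero fun i _ => ?_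
  rw [h ⟨2*i.1, by have := i.2; omega⟩ (by simp [Nat.mul_mod_right]), zero_mul]

def evenPart (n : ℕ) (y : Fin (2*n) → ZMod 2) : Fin (2*n) → ZMod 2 :=
  fun j => if j.1 % 2 = 0 then y j else 0

def oddPart (n : ℕ) (y : Fin (2*n) → ZMod 2) : Fin (2*n) → ZMod 2 :=
  fun j => if j.1 % 2 = 1 then y j else 0

lemma evenPart_add_oddPart (n : ℕ) (y : Fin (2*n) → ZMod 2) :
    evenPart n y + oddPart n y = y := by
  funext j
  rcases Nat.even_or_odd j.1 with h | h
  · have hj := Nat.even_iff.1 h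
    simp [evenPart, oddPart, Pi.add_apply, hj, show j.1 % 2 ≠ 1 by omega]
  · have hj := Nat.odd_iff.1 h
    simp [evenPart, oddPart, Pi.add_apply, hj, show j.1 % 2 ≠ 0 by omega]

lemma evenPart_mem (n : ℕ) (y : Fin (2*n) → ZMod 2) : evenPart n y ∈ PiSub n :=
  (mem_PiSub_iff n _).2 fun j hj => by simp [evenPart, show j.1 % 2 ≠ 0 by omega]

lemma oddPart_mem (n : ℕ) (y : Fin (2*n) → ZMod 2) : oddPart n y ∈ SigmaSub n :=
  (mem_SigmaSub_iff n _).2 fun j hj => by simp [oddPart, show j.1 % 2 ≠ 1 by omega]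

lemma pi_inf_sigma_zero {n : ℕ} {u : Fin (2*n) → ZMod 2}
    (h1 : u ∈ PiSub n) (h2 : u ∈ SigmaSub n) : u = 0 := by
  rw [mem_PiSub_iff] at h1; rw [mem_SigmaSub_iff] at h2
  funext j
  rcases Nat.even_or_odd j.1 with h | h
  · exact h2 j (Nat.even_iff.1 h)
  · exact h1 j (Nat.odd_iff.1 h)

lemma li_pair {n : ℕ} {u w : Fin (2*n) → ZMod 2} (hu : u ≠ 0) (hw : w ≠ 0)
    (huw : u + w ≠ 0) : LinearIndependent (ZMod 2) ![u, w] := by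
  rw [LinearIndependent.pair_iff]
  intro a b hab
  rcases zmod2_cases a with rfl | rfl <;> rcases zmod2_cases b with rfl | rfl <;>
    simp_all [one_smul]

lemma finrank_span_pair {n : ℕ} {u w : Fin (2*n) → ZMod 2}
    (h : LinearIndependent (ZMod 2) ![u, w]) :
    Module.finrank (ZMod 2) (Submodule.span (ZMod 2) {u, w}) = 2 := by
  have hr : Set.range ![u, w] = {u, w} := by
    ext x; simp [Fin.exists_fin_two, or_comm]
  have := finrank_span_eq_card h
  rw [hr] at this
  simpa using this

lemma mem_span_pair_cases {n : ℕ} {u w v : Fin (2*n) → ZMod 2}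
    (h : v ∈ Submodule.span (ZMod 2) {u, w}) :
    v = 0 ∨ v = u ∨ v = w ∨ v = u + w := by
  obtain ⟨a, b, hab⟩ := Submodule.mem_span_pair.1 h
  rcases zmod2_cases a with rfl | rfl <;> rcases zmod2_cases b with rfl | rfl <;>
    simp_all [one_smul] <;> tauto

/-- Key uniqueness: any line through `y` meeting `Π` and `Σ` is `span {evenPart y, oddPart y}`. -/
lemma line_eq (n : ℕ) (y : Fin (2*n) → ZMod 2)
    (hy0 : y ≠ 0) (hyPi : y ∉ PiSub n) (hySigma : y ∉ SigmaSub n)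
    (L : Submodule (ZMod 2) (Fin (2*n) → ZMod 2))
    (hL : Module.finrank (ZMod 2) L = 2) (hyL : y ∈ L)
    (hPi : L ⊓ PiSub n ≠ ⊥) (hSig : L ⊓ SigmaSub n ≠ ⊥) :
    L = Submodule.span (ZMod 2) {evenPart n y, oddPart n y} := by
  obtain ⟨u, huL, hu0⟩ := Submodule.ne_bot_iff _ |>.1 hPi
  obtain ⟨w, hwL, hw0⟩ := Submodule.ne_bot_iff _ |>.1 hSig
  obtain ⟨huL', huPi⟩ := Submodule.mem_inf.1 huL
  obtain ⟨hwL', hwSig⟩ := Submodule.mem_inf.1 hwL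
  have huw : u + w ≠ 0 := by
    intro h
    have key : ∀ a b : ZMod 2, a + b = 0 → a = b := by decide
    have huweq : u = w := funext fun j => key _ _ (congrFun h j)
    exact hu0 (pi_inf_sigma_zero huPi (huweq ▸ hwSig))
  have hli := li_pair hu0 hw0 huw
  have hle : Submodule.span (ZMod 2) {u, w} ≤ L :=
    Submodule.span_le.2 (by rintro x (rfl | rfl); exacts [huL', hwL'])
  have hLeq : Submodule.span (ZMod 2) {u, w} = L :=
    Submodule.eq_of_le_of_finrank_eq hle (by rw [finrank_span_pair hli, hL])
  -- y ∈ span {u, w}, and y ∉ Π, y ∉ Σ forces y = u + w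
  have hy_mem : y ∈ Submodule.span (ZMod 2) {u, w} := hLeq ▸ hyL
  have hyuw : y = u + w := by
    rcases mem_span_pair_cases hy_mem with rfl | rfl | rfl | h
    · exact absurd rfl hy0
    · exact absurd huPi hyPi
    · exact absurd hwSig hySigma
    · exact h
  -- identify u and w with the even/odd parts of y
  have huPi' := (mem_PiSub_iff n u).1 huPi
  have hwSig' := (mem_SigmaSub_iff n w).1 hwSig
  have hu : u = evenPart n y := by
    funext j
    rcases Nat.even_or_odd j.1 with h | h
    · have hj := Nat.even_iff.1 h
      have : y j = u j + w j := by rw [hyuw]; rfl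
      rw [hwSig' j hj, add_zero] at this
      simp [evenPart, hj, this]
    · have hj := Nat.odd_iff.1 h
      simp [evenPart, huPi' j hj, show j.1 % 2 ≠ 0 by omega]
  have hw : w = oddPart n y := by
    funext j
    rcases Nat.even_or_odd j.1 with h | h
    · have hj := Nat.even_iff.1 h
      simp [oddPart, hwSig' j hj, show j.1 % 2 ≠ 1 by omega]
    · have hj := Nat.odd_iff.1 h
      have : y j = u j + w j := by rw [hyuw]; rfl
      rw [huPi' j hj, zero_add] at this
      simp [oddPart, hj, this]
  rw [← hLeq, hu, hw]


/-- Lemma 3: a nonzero singular vector `y` outside `Π` and `Σ` lies in a unique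
line (2-dimensional subspace) meeting both `Π` and `Σ` nontrivially; moreover any
such line is totally singular. -/
theorem unique_line_crossing (n : ℕ) (hn : 2 ≤ n) (y : Fin (2*n) → ZMod 2)
    (hy0 : y ≠ 0) (hy : Q n y = 0) (hyPi : y ∉ PiSub n) (hySigma : y ∉ SigmaSub n) :
    (∃! L : Submodule (ZMod 2) (Fin (2*n) → ZMod 2),
      Module.finrank (ZMod 2) L = 2 ∧ y ∈ L ∧ L ⊓ PiSub n ≠ ⊥ ∧ L ⊓ SigmaSub n ≠ ⊥) ∧
    (∀ L : Submodule (ZMod 2) (Fin (2*n) → ZMod 2),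
      Module.finrank (ZMod 2) L = 2 → y ∈ L → L ⊓ PiSub n ≠ ⊥ → L ⊓ SigmaSub n ≠ ⊥ →
      ∀ v ∈ L, Q n v = 0) := by
  have hps := evenPart_add_oddPart n y
  have hpPi := evenPart_mem n y
  have hsSig := oddPart_mem n y
  have hp0 : evenPart n y ≠ 0 := fun h => hySigma (by rw [← hps, h, zero_add]; exact hsSig)
  have hs0 : oddPart n y ≠ 0 := fun h => hyPi (by rw [← hps, h, add_zero]; exact hpPi)
  have hps0 : evenPart n y + oddPart n y ≠ 0 := by rw [hps]; exact hy0
  have hli := li_pair hp0 hs0 hps0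
  set L0 := Submodule.span (ZMod 2) {evenPart n y, oddPart n y} with hL0
  have hpL0 : evenPart n y ∈ L0 := Submodule.subset_span (Set.mem_insert _ _)
  have hsL0 : oddPart n y ∈ L0 := Submodule.subset_span (Set.mem_insert_of_mem _ rfl)
  have hyL0 : y ∈ L0 := by rw [← hps]; exact Submodule.add_mem _ hpL0 hsL0
  have hfr : Module.finrank (ZMod 2) L0 = 2 := finrank_span_pair hli
  have hPib : L0 ⊓ PiSub n ≠ ⊥ :=
    Submodule.ne_bot_iff _ |>.2 ⟨_, Submodule.mem_inf.2 ⟨hpL0, hpPi⟩, hp0⟩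
  have hSigb : L0 ⊓ SigmaSub n ≠ ⊥ :=
    Submodule.ne_bot_iff _ |>.2 ⟨_, Submodule.mem_inf.2 ⟨hsL0, hsSig⟩, hs0⟩
  refine ⟨⟨L0, ⟨hfr, hyL0, hPib, hSigb⟩, ?_⟩, ?_⟩
  · rintro L' ⟨h1, h2, h3, h4⟩
    rw [line_eq n y hy0 hyPi hySigma L' h1 h2 h3 h4, hL0]
  · intro L h1 h2 h3 h4 v hv
    rw [line_eq n y hy0 hyPi hySigma L h1 h2 h3 h4] at hv
    rcases mem_span_pair_cases hv with rfl | rfl | rfl | rfl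
    · unfold Q; simp
    · exact Q_even_supported n _ ((mem_PiSub_iff n _).1 hpPi)
    · exact Q_odd_supported n _ ((mem_SigmaSub_iff n _).1 hsSig)
    · rw [hps]; exact hy
end

section
/- Let x be a nonsingular vector of V(2n,2), let X = span{x}, G = X^⊥ ⊓ Π, H = X^⊥ ⊓ Σ, and P = G^⊥ ⊓ Σ. Then the subspace (G ⊔ H)^⊥ is a line (it has dimension 2), and it contains both the vector x and the point P. -/
/-! Write `X = x^⊥`. Since `Q x = 1`, some pair of coordinates `x (2k), x (2k+1)` are both `1`,
so neither `Π` nor `Σ` lies in the hyperplane `X`; hence `G = X ⊓ Π` and `H = X ⊓ Σ` are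
hyperplanes of the complementary subspaces `Π` and `Σ`, and `G ⊔ H` has dimension `2n - 2`.
As `B` is nondegenerate, `(G ⊔ H)^⊥` has dimension `2`. It contains `x` because `G ⊔ H ≤ X`,
and it contains `G^⊥ ⊓ Σ` because `Σ` is totally singular, so `Σ ≤ Σ^⊥ ≤ H^⊥`. -/

open Submodule Module

section SpanSingle

variable {ι R : Type*} [DecidableEq ι] [Semiring R]

lemma span_single_le_pi (p : ι → Prop) :
    span R {v : ι → R | ∃ j, p j ∧ v = Pi.single j 1} ≤
      Submodule.pi {j | ¬ p j} fun _ => ⊥ := by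
  rw [span_le]
  rintro _ ⟨j, hj, rfl⟩ i (hi : ¬ p i)
  rw [Pi.single_eq_of_ne (by rintro rfl; exact hi hj)]
  exact zero_mem _

lemma isCompl_span_single [Finite ι] (p q : ι → Prop) (hpq : ∀ j, q j ↔ ¬ p j) :
    IsCompl (span R {v : ι → R | ∃ j, p j ∧ v = Pi.single j 1})
      (span R {v : ι → R | ∃ j, q j ∧ v = Pi.single j 1}) := by
  constructor
  · rw [disjoint_iff_inf_le]
    rintro v ⟨hp, hq⟩
    have hp := span_single_le_pi p hp
    have hq := span_single_le_pi q hq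
    refine (mem_bot R).2 (funext fun j => ?_)
    by_cases hj : p j
    · exact hq j fun hqj => (hpq j).1 hqj hj
    · exact hp j hj
  · rw [codisjoint_iff, ← span_union, eq_top_iff, ← (Pi.basisFun R ι).span_eq]
    refine span_mono ?_
    rintro _ ⟨j, rfl⟩
    by_cases hj : p j
    · exact Or.inl ⟨j, hj, Pi.basisFun_apply R ι j⟩
    · exact Or.inr ⟨j, (hpq j).2 hj, Pi.basisFun_apply R ι j⟩

end SpanSingle

lemma Module.Dual.finrank_ker_inf_add_one {K V : Type*} [Field K] [AddCommGroup V] [Module K V]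
    [FiniteDimensional K V] {f : Module.Dual K V} {A : Submodule K V}
    (hA : ¬ A ≤ LinearMap.ker f) :
    finrank K (LinearMap.ker f ⊓ A : Submodule K V) + 1 = finrank K A := by
  have hf : f.domRestrict A ≠ 0 := fun h => hA fun v hv => LinearMap.congr_fun h ⟨v, hv⟩
  rw [← Module.Dual.finrank_ker_add_one_of_ne_zero hf, LinearMap.ker_domRestrict,
    ← finrank_map_subtype_eq, map_comap_subtype, inf_comm]

section Hyperbolic

variable (n : ℕ)

lemma B_comm (u v : Fin (2*n) → ZMod 2) : B n u v = B n v u := by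
  simp only [B_eq]
  exact Finset.sum_congr rfl fun i _ => by ring

lemma B_add_right (u v w : Fin (2*n) → ZMod 2) : B n u (v + w) = B n u v + B n u w := by
  rw [B_comm, B_add_left, B_comm n v, B_comm n w]

lemma B_smul_right (c : ZMod 2) (u v : Fin (2*n) → ZMod 2) : B n u (c • v) = c * B n u v := by
  rw [B_comm, B_smul_left, B_comm]

def bilinForm : LinearMap.BilinForm (ZMod 2) (Fin (2*n) → ZMod 2) :=
  LinearMap.mk₂ (ZMod 2) (B n) (B_add_left n) (B_smul_left n) (B_add_right n) (B_smul_right n)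

lemma B_single_even (v : Fin (2*n) → ZMod 2) (k : Fin n) :
    B n v (Pi.single ⟨2*k.1, by omega⟩ 1) = v ⟨2*k.1+1, by omega⟩ := by
  have h (i : Fin n) : 2*i.1+1 ≠ 2*k.1 := by omega
  simp [B_eq, Pi.single_apply, h, Fin.val_inj]

lemma B_single_odd (v : Fin (2*n) → ZMod 2) (k : Fin n) :
    B n v (Pi.single ⟨2*k.1+1, by omega⟩ 1) = v ⟨2*k.1, by omega⟩ := by
  have h (i : Fin n) : 2*i.1 ≠ 2*k.1+1 := by omega
  simp [B_eq, Pi.single_apply, h, Fin.val_inj]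

lemma exists_eq_two_mul_or_eq_two_mul_add_one (j : Fin (2*n)) :
    ∃ k : Fin n, j = ⟨2*k.1, by omega⟩ ∨ j = ⟨2*k.1+1, by omega⟩ := by
  refine ⟨⟨j / 2, by omega⟩, ?_⟩
  rcases Nat.mod_two_eq_zero_or_one j with h | h
  · exact Or.inl (Fin.ext (by simp only; omega))
  · exact Or.inr (Fin.ext (by simp only; omega))

lemma bilinForm_nondegenerate : (bilinForm n).Nondegenerate := by
  refine (LinearMap.IsRefl.nondegenerate_iff_separatingLeft
    fun u v h => (B_comm n v u).trans h).2 fun v hv => funext fun j => ?_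
  obtain ⟨k, rfl | rfl⟩ := exists_eq_two_mul_or_eq_two_mul_add_one n j
  · exact (B_single_odd n v k).symm.trans (hv _)
  · exact (B_single_even n v k).symm.trans (hv _)

lemma perp_eq_orthogonal (S : Submodule (ZMod 2) (Fin (2*n) → ZMod 2)) :
    perp n S = (bilinForm n).orthogonal S := by
  ext v
  exact forall₂_congr fun s _ => by rw [B_comm]; rfl

lemma finrank_perp_add_finrank (S : Submodule (ZMod 2) (Fin (2*n) → ZMod 2)) :
    finrank (ZMod 2) (perp n S) + finrank (ZMod 2) S = 2 * n := by
  have hS := Submodule.finrank_le S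
  rw [Module.finrank_fin_fun] at hS
  rw [perp_eq_orthogonal, LinearMap.BilinForm.finrank_orthogonal (bilinForm_nondegenerate n),
    Module.finrank_fin_fun]
  omega

variable {n}

lemma perp_le_perp {S T : Submodule (ZMod 2) (Fin (2*n) → ZMod 2)} (h : S ≤ T) :
    perp n T ≤ perp n S :=
  fun _ hv s hs => hv s (h hs)

lemma le_perp_perp (S : Submodule (ZMod 2) (Fin (2*n) → ZMod 2)) : S ≤ perp n (perp n S) :=
  fun s hs v hv => (B_comm n s v).trans (hv s hs)

lemma perp_sup (S T : Submodule (ZMod 2) (Fin (2*n) → ZMod 2)) :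
    perp n (S ⊔ T) = perp n S ⊓ perp n T := by
  refine le_antisymm (le_inf (perp_le_perp le_sup_left) (perp_le_perp le_sup_right)) ?_
  rintro v ⟨hS, hT⟩ w hw
  obtain ⟨s, hs, t, ht, rfl⟩ := mem_sup.1 hw
  rw [B_add_right, hS s hs, hT t ht, add_zero]

lemma perp_span_singleton (x : Fin (2*n) → ZMod 2) :
    perp n (span (ZMod 2) {x}) = LinearMap.ker (bilinForm n x) := by
  ext v
  refine ⟨fun hv => (B_comm n x v).trans (hv x (mem_span_singleton_self x)), fun hv s hs => ?_⟩
  obtain ⟨c, rfl⟩ := mem_span_singleton.1 hs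
  rw [B_smul_right, B_comm]
  exact mul_eq_zero_of_right c hv

lemma finrank_perp_span_inf_add_one {x : Fin (2*n) → ZMod 2}
    {A : Submodule (ZMod 2) (Fin (2*n) → ZMod 2)} (hA : ∃ a ∈ A, B n x a ≠ 0) :
    finrank (ZMod 2) (perp n (span (ZMod 2) {x}) ⊓ A : Submodule _ _) + 1 =
      finrank (ZMod 2) A := by
  obtain ⟨a, ha, hax⟩ := hA
  rw [perp_span_singleton]
  exact Module.Dual.finrank_ker_inf_add_one fun h => hax (h ha)

lemma isCompl_PiSub_SigmaSub : IsCompl (PiSub n) (SigmaSub n) :=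
  isCompl_span_single _ _ fun _ => by omega

lemma finrank_PiSub_add_finrank_SigmaSub :
    finrank (ZMod 2) (PiSub n) + finrank (ZMod 2) (SigmaSub n) = 2 * n := by
  rw [finrank_add_eq_of_isCompl isCompl_PiSub_SigmaSub, Module.finrank_fin_fun]

lemma single_even_mem_PiSub (k : Fin n) : Pi.single ⟨2*k.1, by omega⟩ 1 ∈ PiSub n :=
  subset_span ⟨_, by simp, rfl⟩

lemma single_odd_mem_SigmaSub (k : Fin n) : Pi.single ⟨2*k.1+1, by omega⟩ 1 ∈ SigmaSub n :=
  subset_span ⟨_, by simp, rfl⟩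

lemma SigmaSub_le_perp : SigmaSub n ≤ perp n (SigmaSub n) := by
  intro u hu v hv
  have hu := span_single_le_pi _ hu
  have hv := span_single_le_pi _ hv
  rw [B_eq]
  refine Finset.sum_eq_zero fun i _ => ?_
  rw [hu ⟨2*i.1, by omega⟩ (by simp), hv ⟨2*i.1, by omega⟩ (by simp)]
  ring

lemma exists_coord_eq_one_of_Q_eq_one {x : Fin (2*n) → ZMod 2} (hx : Q n x = 1) :
    ∃ k : Fin n, x ⟨2*k.1, by omega⟩ = 1 ∧ x ⟨2*k.1+1, by omega⟩ = 1 := by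
  obtain ⟨k, -, hk⟩ := Finset.exists_ne_zero_of_sum_ne_zero (hx.trans_ne one_ne_zero)
  exact ⟨k, (by decide : ∀ a b : ZMod 2, a * b ≠ 0 → a = 1 ∧ b = 1) _ _ hk⟩

end Hyperbolic

theorem perp_sup_is_line_general (n : ℕ) (x : Fin (2*n) → ZMod 2) (hx : Q n x = 1) :
    Module.finrank (ZMod 2)
        (perp n ((perp n (Submodule.span (ZMod 2) {x}) ⊓ PiSub n) ⊔
          (perp n (Submodule.span (ZMod 2) {x}) ⊓ SigmaSub n)) :
          Submodule (ZMod 2) (Fin (2*n) → ZMod 2)) = 2 ∧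
    x ∈ perp n ((perp n (Submodule.span (ZMod 2) {x}) ⊓ PiSub n) ⊔
          (perp n (Submodule.span (ZMod 2) {x}) ⊓ SigmaSub n)) ∧
    perp n (perp n (Submodule.span (ZMod 2) {x}) ⊓ PiSub n) ⊓ SigmaSub n ≤
      perp n ((perp n (Submodule.span (ZMod 2) {x}) ⊓ PiSub n) ⊔
          (perp n (Submodule.span (ZMod 2) {x}) ⊓ SigmaSub n)) := by
  obtain ⟨k, hk₀, hk₁⟩ := exists_coord_eq_one_of_Q_eq_one hx
  have hG := finrank_perp_span_inf_add_one (x := x) (A := PiSub n)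
    ⟨_, single_even_mem_PiSub k, by rw [B_single_even, hk₁]; exact one_ne_zero⟩
  have hH := finrank_perp_span_inf_add_one (x := x) (A := SigmaSub n)
    ⟨_, single_odd_mem_SigmaSub k, by rw [B_single_odd, hk₀]; exact one_ne_zero⟩
  set X := perp n (span (ZMod 2) {x})
  have hdisj : Disjoint (X ⊓ PiSub n) (X ⊓ SigmaSub n) :=
    isCompl_PiSub_SigmaSub.disjoint.mono inf_le_right inf_le_right
  have hGH := finrank_sup_add_finrank_inf_eq (X ⊓ PiSub n) (X ⊓ SigmaSub n)
  rw [hdisj.eq_bot, finrank_bot] at hGH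
  have hperp := finrank_perp_add_finrank n ((X ⊓ PiSub n) ⊔ (X ⊓ SigmaSub n))
  have hPiSigma := finrank_PiSub_add_finrank_SigmaSub (n := n)
  refine ⟨by omega, ?_, ?_⟩
  · exact perp_le_perp (sup_le inf_le_left inf_le_left)
      (le_perp_perp _ (mem_span_singleton_self x))
  · rw [perp_sup]
    exact inf_le_inf_left _ (SigmaSub_le_perp.trans (perp_le_perp inf_le_right))

/-- For a nonsingular vector `x`, with `X = span{x}`, `G = X^⊥ ⊓ Π`, `H = X^⊥ ⊓ Σ`
and `P = G^⊥ ⊓ Σ`, the subspace `(G ⊔ H)^⊥` is a line (has dimension 2) containing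
both the vector `x` and the point `P`. -/
theorem perp_sup_is_line (n : ℕ) (hn : 2 ≤ n) (x : Fin (2*n) → ZMod 2) (hx : Q n x = 1) :
    Module.finrank (ZMod 2)
        (perp n ((perp n (Submodule.span (ZMod 2) {x}) ⊓ PiSub n) ⊔
          (perp n (Submodule.span (ZMod 2) {x}) ⊓ SigmaSub n)) :
          Submodule (ZMod 2) (Fin (2*n) → ZMod 2)) = 2 ∧
    x ∈ perp n ((perp n (Submodule.span (ZMod 2) {x}) ⊓ PiSub n) ⊔
          (perp n (Submodule.span (ZMod 2) {x}) ⊓ SigmaSub n)) ∧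
    perp n (perp n (Submodule.span (ZMod 2) {x}) ⊓ PiSub n) ⊓ SigmaSub n ≤
      perp n ((perp n (Submodule.span (ZMod 2) {x}) ⊓ PiSub n) ⊔
          (perp n (Submodule.span (ZMod 2) {x}) ⊓ SigmaSub n)) :=
  perp_sup_is_line_general n x hx
end
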